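/- arXiv:2305.17725 — 3 statements merged into one kernel-verified Lean document; each statement's English description precedes it below -/
import Mathlib

section
/- The set-valued map x ↦ F[f](x) given by the Filippov convexification of a locally bounded f: ℝⁿ → ℝⁿ is upper semicontinuous: for every x and every open set U containing F[f](x), there exists ε > 0 such that F[f](y) ⊆ U for all y with ‖y − x‖ < ε. -/
/-!
On the ball `B(x, δ)` where `f` is bounded, the closed convex hulls
`K ε = closure (convexHull (f '' B(x, ε)))`, `0 < ε ≤ δ`, form a decreasing family of compact
sets whose intersection is `F[f](x)`. By compactness, if `F[f](x) ⊆ U` with `U` open, already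
some `K ε ⊆ U`; and for `‖y - x‖ < ε / 2` we have `B(y, ε / 2) ⊆ B(x, ε)`, hence
`F[f](y) ⊆ K ε ⊆ U`.
-/

open Metric Set

theorem Monotone.exists_pos_subset_of_biInter_subset {X : Type*} [TopologicalSpace X]
    {K : ℝ → Set X} (hmono : Monotone K) (hclosed : ∀ ε, IsClosed (K ε)) {δ : ℝ} (hδ : 0 < δ)
    (hcpt : IsCompact (K δ)) {U : Set X} (hU : IsOpen U) (hKU : ⋂ ε > 0, K ε ⊆ U) :
    ∃ ε > 0, K ε ⊆ U := by
  have : Nonempty (Ioc 0 δ) := ⟨⟨δ, hδ, le_rfl⟩⟩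
  have hdir : Directed (· ⊇ ·) fun i : Ioc 0 δ => K i :=
    (hmono.comp (Subtype.mono_coe (· ∈ Ioc 0 δ))).directed_ge
  have hinter : ⋂ i : Ioc 0 δ, K i ⊆ ⋂ ε > 0, K ε := by
    refine subset_iInter₂ fun ε hε z hz => ?_
    exact hmono (min_le_left ε δ) (mem_iInter.1 hz ⟨min ε δ, lt_min hε hδ, min_le_right ε δ⟩)
  obtain ⟨i, hi⟩ := exists_subset_nhds_of_isCompact' hdir
    (fun i => hcpt.of_isClosed_subset (hclosed i) (hmono i.2.2)) (fun i => hclosed i)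
    (fun z hz => hU.mem_nhds (hKU (hinter hz)))
  exact ⟨i, i.2.1, hi⟩

section Filippov

variable {X E : Type*} [PseudoMetricSpace X] [NormedAddCommGroup E] [NormedSpace ℝ E]

def filippovHull (f : X → E) (x : X) (ε : ℝ) : Set E :=
  closure (convexHull ℝ (f '' ball x ε))

/-- The Filippov convexification `F[f](x)`, without removal of null sets. -/
def filippovSet (f : X → E) (x : X) : Set E :=
  ⋂ ε > 0, filippovHull f x ε

theorem filippovHull_mono (f : X → E) (x : X) : Monotone (filippovHull f x) :=
  fun _ _ h => closure_mono (convexHull_mono (image_mono (ball_subset_ball h)))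

theorem isClosed_filippovHull (f : X → E) (x : X) (ε : ℝ) : IsClosed (filippovHull f x ε) :=
  isClosed_closure

theorem filippovHull_subset_filippovHull {f : X → E} {x y : X} {ε₁ ε₂ : ℝ}
    (h : ε₁ + dist y x ≤ ε₂) : filippovHull f y ε₁ ⊆ filippovHull f x ε₂ :=
  closure_mono (convexHull_mono (image_mono (ball_subset_ball' h)))

theorem filippovSet_subset_filippovHull (f : X → E) (x : X) {ε : ℝ} (hε : 0 < ε) :
    filippovSet f x ⊆ filippovHull f x ε :=
  biInter_subset_of_mem (t := filippovHull f x) hε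

theorem filippovHull_subset_closedBall {f : X → E} {x : X} {ε C : ℝ}
    (hC : ∀ y ∈ ball x ε, ‖f y‖ ≤ C) : filippovHull f x ε ⊆ closedBall 0 C := by
  refine closure_minimal (convexHull_min ?_ (convex_closedBall 0 C)) isClosed_closedBall
  rintro _ ⟨y, hy, rfl⟩
  simpa using hC y hy

theorem isCompact_filippovHull [ProperSpace E] {f : X → E} {x : X} {ε C : ℝ}
    (hC : ∀ y ∈ ball x ε, ‖f y‖ ≤ C) : IsCompact (filippovHull f x ε) :=
  (isCompact_closedBall 0 C).of_isClosed_subset (isClosed_filippovHull f x ε)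
    (filippovHull_subset_closedBall hC)

theorem exists_pos_forall_dist_lt_filippovSet_subset [ProperSpace E] {f : X → E} {x : X}
    (hloc : ∃ δ > 0, ∃ C, ∀ y ∈ ball x δ, ‖f y‖ ≤ C) {U : Set E} (hU : IsOpen U)
    (hxU : filippovSet f x ⊆ U) : ∃ ε > 0, ∀ y, dist y x < ε → filippovSet f y ⊆ U := by
  obtain ⟨δ, hδ, C, hC⟩ := hloc
  obtain ⟨ε, hε, hεU⟩ := (filippovHull_mono f x).exists_pos_subset_of_biInter_subset
    (isClosed_filippovHull f x) hδ (isCompact_filippovHull hC) hU hxU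
  refine ⟨ε / 2, half_pos hε, fun y hy => ?_⟩
  calc filippovSet f y ⊆ filippovHull f y (ε / 2) :=
        filippovSet_subset_filippovHull f y (half_pos hε)
    _ ⊆ filippovHull f x ε := filippovHull_subset_filippovHull (by linarith)
    _ ⊆ U := hεU

end Filippov

/-- The Filippov convexification of a locally bounded `f : ℝⁿ → ℝⁿ` is upper semicontinuous
as a set-valued map. -/
theorem filippov_upper_semicontinuous (n : ℕ)
    (f : EuclideanSpace ℝ (Fin n) → EuclideanSpace ℝ (Fin n))
    (hloc : ∀ x : EuclideanSpace ℝ (Fin n), ∃ ε > (0 : ℝ), ∃ C : ℝ,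
      ∀ y ∈ Metric.ball x ε, ‖f y‖ ≤ C)
    (F : EuclideanSpace ℝ (Fin n) → Set (EuclideanSpace ℝ (Fin n)))
    (hF : ∀ x, F x = ⋂ ε > (0 : ℝ), closure (convexHull ℝ (f '' Metric.ball x ε))) :
    ∀ (x : EuclideanSpace ℝ (Fin n)) (U : Set (EuclideanSpace ℝ (Fin n))),
      IsOpen U → F x ⊆ U →
        ∃ ε > (0 : ℝ), ∀ y : EuclideanSpace ℝ (Fin n), ‖y - x‖ < ε → F y ⊆ U := by
  obtain rfl : F = filippovSet f := funext hF
  intro x U hU hxU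
  simpa only [dist_eq_norm] using exists_pos_forall_dist_lt_filippovSet_subset (hloc x) hU hxU
end

section
/- An iterated function system on a complete metric space given by finitely many maps F_m with constant probabilities p_m > 0 summing to 1 and satisfying the average contraction condition Σ_m p_m · Lip(F_m) < 1 (each F_m Lipschitz) admits a unique fixed point of the induced map on probability measures with finite first moment equipped with the Wasserstein-1 distance; that is, the dual transfer operator μ ↦ Σ_m p_m · (F_m)_* μ is a contraction on the Wasserstein-1 space and hence has a unique invariant probability measure. -/
open MeasureTheory ENNReal

noncomputable def W1 {X : Type*} [MeasurableSpace X] [MetricSpace X]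
    (μ ν : Measure X) : ℝ≥0∞ :=
  ⨅ (γ : Measure (X × X)) (_ : γ.map Prod.fst = μ ∧ γ.map Prod.snd = ν),
    ∫⁻ p : X × X, edist p.1 p.2 ∂γ

def HasFiniteFirstMoment {X : Type*} [MeasurableSpace X] [MetricSpace X]
    (μ : Measure X) : Prop :=
  ∃ x₀ : X, ∫⁻ x, edist x x₀ ∂μ ≠ ⊤

/-!
Write `T μ = ∑ m, p m • (F m)_* μ` and `c = ∑ m, p m * L m < 1`. Pushing a coupling of `μ` and `ν`
forward by `F m` in both coordinates couples `(F m)_* μ` with `(F m)_* ν` at cost at most `L m`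
times the original cost; mixing over `m` shows that `T` contracts `W1` by the factor `c`. Two
fixed points are therefore at distance `0`, and `W1`-distance `0` forces equality on closed sets
(Markov's inequality for the cost, then shrinking thickenings).

Existence avoids completeness of the Wasserstein space. For an i.i.d. sequence of digits `ω`
with law `p`, the backward iterates `F (ω 0) ∘ ⋯ ∘ F (ω (n - 1)) x₀` make steps whose expected
lengths decay like `cⁿ`, so they converge almost surely to some `Z ω`, and
`Z ω = F (ω 0) (Z (shift ω))`. As `ω 0` is independent of `shift ω`, whose law is that of `ω`,
the law of `Z` is a fixed point of `T`.
-/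

open Filter Topology ProbabilityTheory

section Coupling

variable {X Y : Type*} [MeasurableSpace X] [MeasurableSpace Y]

def IsCoupling (γ : Measure (X × Y)) (μ : Measure X) (ν : Measure Y) : Prop :=
  γ.map Prod.fst = μ ∧ γ.map Prod.snd = ν

variable {γ : Measure (X × Y)} {μ : Measure X} {ν : Measure Y}

lemma IsCoupling.lintegral_comp_fst (h : IsCoupling γ μ ν) {f : X → ℝ≥0∞} (hf : Measurable f) :
    ∫⁻ q, f q.1 ∂γ = ∫⁻ x, f x ∂μ := by
  rw [← h.1, lintegral_map hf measurable_fst]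

lemma IsCoupling.lintegral_comp_snd (h : IsCoupling γ μ ν) {f : Y → ℝ≥0∞} (hf : Measurable f) :
    ∫⁻ q, f q.2 ∂γ = ∫⁻ y, f y ∂ν := by
  rw [← h.2, lintegral_map hf measurable_snd]

lemma IsCoupling.map_swap (h : IsCoupling γ μ ν) : IsCoupling (γ.map Prod.swap) ν μ := by
  constructor
  · rw [Measure.map_map measurable_fst measurable_swap]
    exact h.2
  · rw [Measure.map_map measurable_snd measurable_swap]
    exact h.1

lemma isCoupling_prod [IsProbabilityMeasure μ] [IsProbabilityMeasure ν] :
    IsCoupling (μ.prod ν) μ ν :=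
  ⟨by simp [Measure.map_fst_prod], by simp [Measure.map_snd_prod]⟩

end Coupling

section Wasserstein

variable {X : Type*} [MetricSpace X] [MeasurableSpace X] {μ ν : Measure X}
  {γ : Measure (X × X)}

lemma W1_le_lintegral_edist (h : IsCoupling γ μ ν) : W1 μ ν ≤ ∫⁻ q, edist q.1 q.2 ∂γ :=
  iInf₂_le γ h

lemma exists_isCoupling_lintegral_edist_lt {r : ℝ≥0∞} (h : W1 μ ν < r) :
    ∃ γ, IsCoupling γ μ ν ∧ ∫⁻ q, edist q.1 q.2 ∂γ < r := by
  simpa only [W1, iInf_lt_iff, exists_prop, IsCoupling] using h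

lemma W1_le_mul_W1_of_forall_isCoupling {a c : ℝ≥0∞} (hc : c ≠ ⊤) (hW : W1 μ ν ≠ ⊤)
    (h : ∀ γ, IsCoupling γ μ ν → a ≤ c * ∫⁻ q, edist q.1 q.2 ∂γ) : a ≤ c * W1 μ ν := by
  refine le_of_forall_gt fun r hr => ?_
  obtain ⟨γ, hγ, hcost⟩ : ∃ γ, IsCoupling γ μ ν ∧ c * ∫⁻ q, edist q.1 q.2 ∂γ < r := by
    rcases eq_or_ne c 0 with rfl | hc0
    · obtain ⟨γ, hγ, -⟩ := exists_isCoupling_lintegral_edist_lt hW.lt_top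
      exact ⟨γ, hγ, by simpa using pos_of_gt hr⟩
    · obtain ⟨γ, hγ, hlt⟩ := exists_isCoupling_lintegral_edist_lt
        ((ENNReal.lt_div_iff_mul_lt (.inl hc0) (.inl hc)).2 (by rwa [mul_comm]))
      exact ⟨γ, hγ, by rwa [mul_comm, ← ENNReal.lt_div_iff_mul_lt (.inl hc0) (.inl hc)]⟩
  exact (h γ hγ).trans_lt hcost

lemma HasFiniteFirstMoment.lintegral_edist_ne_top [IsFiniteMeasure μ]
    (h : HasFiniteFirstMoment μ) (x : X) : ∫⁻ y, edist y x ∂μ ≠ ⊤ := by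
  obtain ⟨x₀, hx₀⟩ := h
  have hle : ∫⁻ y, edist y x ∂μ ≤ ∫⁻ y, edist y x₀ ∂μ + edist x₀ x * μ Set.univ := by
    rw [← lintegral_const, ← lintegral_add_right _ measurable_const]
    exact lintegral_mono fun y => edist_triangle _ _ _
  exact ne_top_of_le_ne_top
    (add_ne_top.2 ⟨hx₀, mul_ne_top (edist_ne_top _ _) (measure_ne_top _ _)⟩) hle

lemma W1_lt_top [OpensMeasurableSpace X] [IsProbabilityMeasure μ] [IsProbabilityMeasure ν]
    (hμ : HasFiniteFirstMoment μ) (hν : HasFiniteFirstMoment ν) : W1 μ ν < ⊤ := by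
  obtain ⟨x₀, hx₀⟩ := hμ
  have hmeas : Measurable fun x : X => edist x x₀ :=
    (continuous_id.edist continuous_const).measurable
  refine (W1_le_lintegral_edist isCoupling_prod).trans_lt ?_
  calc ∫⁻ q, edist q.1 q.2 ∂(μ.prod ν)
      ≤ ∫⁻ q, (edist q.1 x₀ + edist q.2 x₀) ∂(μ.prod ν) :=
        lintegral_mono fun q => edist_triangle_right _ _ _
    _ = ∫⁻ x, edist x x₀ ∂μ + ∫⁻ y, edist y x₀ ∂ν := by
        rw [lintegral_add_left (f := fun q : X × X => edist q.1 x₀) (hmeas.comp measurable_fst),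
          isCoupling_prod.lintegral_comp_fst hmeas, isCoupling_prod.lintegral_comp_snd hmeas]
    _ < ⊤ := add_lt_top.2 ⟨hx₀.lt_top, (hν.lintegral_edist_ne_top x₀).lt_top⟩

variable [SecondCountableTopology X]

lemma W1_comm [OpensMeasurableSpace X] : W1 μ ν = W1 ν μ := by
  have hle : ∀ μ ν : Measure X, W1 ν μ ≤ W1 μ ν := fun μ ν =>
    le_iInf₂ fun γ (hγ : IsCoupling γ μ ν) => (W1_le_lintegral_edist hγ.map_swap).trans_eq <| by
      rw [lintegral_map measurable_edist measurable_swap]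
      simp_rw [Prod.fst_swap, Prod.snd_swap, edist_comm]
  exact le_antisymm (hle ν μ) (hle μ ν)

lemma IsCoupling.measure_le_measure_thickening_add [OpensMeasurableSpace X]
    (h : IsCoupling γ μ ν) {E : Set X} (hE : MeasurableSet E) {δ : ℝ} (hδ : 0 < δ) :
    μ E ≤ ν (Metric.thickening δ E) + (∫⁻ q, edist q.1 q.2 ∂γ) / ENNReal.ofReal δ := by
  have hsub : Prod.fst ⁻¹' E ⊆
      Prod.snd ⁻¹' Metric.thickening δ E ∪ {q | ENNReal.ofReal δ ≤ edist q.1 q.2} := by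
    rintro ⟨x, y⟩ hx
    rcases lt_or_ge (edist x y) (ENNReal.ofReal δ) with hxy | hxy
    · exact .inl ((Metric.mem_thickening_iff_exists_edist_lt E y).2 ⟨x, hx, by rwa [edist_comm]⟩)
    · exact .inr hxy
  calc μ E = γ (Prod.fst ⁻¹' E) := by rw [← h.1, Measure.map_apply measurable_fst hE]
    _ ≤ γ (Prod.snd ⁻¹' Metric.thickening δ E) + γ {q | ENNReal.ofReal δ ≤ edist q.1 q.2} :=
        (measure_mono hsub).trans (measure_union_le _ _)
    _ ≤ ν (Metric.thickening δ E) + (∫⁻ q, edist q.1 q.2 ∂γ) / ENNReal.ofReal δ := by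
        rw [← h.2, Measure.map_apply measurable_snd Metric.isOpen_thickening.measurableSet]
        gcongr
        exact meas_ge_le_lintegral_div measurable_edist.aemeasurable
          (ofReal_pos.2 hδ).ne' ofReal_ne_top

lemma measure_le_of_W1_eq_zero [OpensMeasurableSpace X] [IsFiniteMeasure ν]
    (h : W1 μ ν = 0) {E : Set X} (hE : IsClosed E) : μ E ≤ ν E := by
  have hthick : ∀ δ > 0, μ E ≤ ν (Metric.thickening δ E) := fun δ hδ =>
    ENNReal.le_of_forall_pos_le_add fun ε hε _ => by
      obtain ⟨γ, hγ, hcost⟩ := exists_isCoupling_lintegral_edist_lt (r := ε * ENNReal.ofReal δ)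
        (by rw [h]; exact ENNReal.mul_pos (by exact_mod_cast hε.ne') (ofReal_pos.2 hδ).ne')
      calc μ E ≤ ν (Metric.thickening δ E) + (∫⁻ q, edist q.1 q.2 ∂γ) / ENNReal.ofReal δ :=
            hγ.measure_le_measure_thickening_add hE.measurableSet hδ
        _ ≤ ν (Metric.thickening δ E) + ε := by gcongr; exact ENNReal.div_le_of_le_mul hcost.le
  exact ge_of_tendsto (tendsto_measure_thickening_of_isClosed ⟨1, one_pos, measure_ne_top _ _⟩ hE)
    (eventually_mem_nhdsWithin.mono hthick)

lemma eq_of_W1_eq_zero [BorelSpace X] [IsProbabilityMeasure μ] [IsProbabilityMeasure ν]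
    (h : W1 μ ν = 0) : μ = ν :=
  ext_of_generate_finite _ (BorelSpace.measurable_eq.trans borel_eq_generateFrom_isClosed)
    isPiSystem_isClosed (fun _ hE => le_antisymm (measure_le_of_W1_eq_zero h hE)
      (measure_le_of_W1_eq_zero (W1_comm.symm.trans h) hE)) (by simp)

end Wasserstein

section TransferOperator

variable {M : Type*} [Fintype M] {X Y Z : Type*} [MeasurableSpace X] [MeasurableSpace Y]
  [MeasurableSpace Z]

noncomputable def transferOperator (p : M → ℝ≥0∞) (F : M → X → Y) (μ : Measure X) :
    Measure Y :=
  ∑ m, p m • μ.map (F m)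

variable {p : M → ℝ≥0∞} {F : M → X → Y}

lemma transferOperator_map {g : Z → X} (hg : Measurable g) (hF : ∀ m, Measurable (F m))
    (μ : Measure Z) :
    transferOperator p F (μ.map g) = transferOperator p (fun m => F m ∘ g) μ := by
  simp only [transferOperator, Measure.map_map (hF _) hg]

lemma map_transferOperator {g : Y → Z} (hg : Measurable g) (hF : ∀ m, Measurable (F m))
    (μ : Measure X) :
    (transferOperator p F μ).map g = transferOperator p (fun m => g ∘ F m) μ := by
  simp only [transferOperator, Measure.map_finset_sum' hg.aemeasurable, Measure.map_smul,
    Measure.map_map hg (hF _)]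

lemma lintegral_transferOperator (hF : ∀ m, Measurable (F m)) {f : Y → ℝ≥0∞}
    (hf : Measurable f) (μ : Measure X) :
    ∫⁻ y, f y ∂(transferOperator p F μ) = ∑ m, p m * ∫⁻ x, f (F m x) ∂μ := by
  simp only [transferOperator, lintegral_finsetSum_measure, lintegral_smul_measure,
    lintegral_map hf (hF _), smul_eq_mul]

lemma IsCoupling.transferOperator {μ ν : Measure X} {γ : Measure (X × X)}
    (hF : ∀ m, Measurable (F m)) (h : IsCoupling γ μ ν) :
    IsCoupling (transferOperator p (fun m => Prod.map (F m) (F m)) γ)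
      (transferOperator p F μ) (transferOperator p F ν) := by
  have hFF : ∀ m, Measurable (Prod.map (F m) (F m)) := fun m => (hF m).prodMap (hF m)
  constructor
  · rw [map_transferOperator measurable_fst hFF, ← h.1, transferOperator_map measurable_fst hF]
    rfl
  · rw [map_transferOperator measurable_snd hFF, ← h.2, transferOperator_map measurable_snd hF]
    rfl

end TransferOperator

section Contraction

variable {M : Type*} [Fintype M] {X : Type*} [MetricSpace X] [MeasurableSpace X] [BorelSpace X]
  [SecondCountableTopology X] {F : M → X → X} {L : M → NNReal} {p : M → ℝ≥0∞}
  {μ ν : Measure X}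

lemma lintegral_edist_transferOperator_prodMap_le (hLip : ∀ m, LipschitzWith (L m) (F m))
    (γ : Measure (X × X)) :
    ∫⁻ q, edist q.1 q.2 ∂(transferOperator p (fun m => Prod.map (F m) (F m)) γ)
      ≤ (∑ m, p m * (L m : ℝ≥0∞)) * ∫⁻ q, edist q.1 q.2 ∂γ := by
  rw [lintegral_transferOperator (fun m => (hLip m).continuous.measurable.prodMap
    (hLip m).continuous.measurable) measurable_edist, Finset.sum_mul]
  refine Finset.sum_le_sum fun m _ => ?_
  rw [mul_assoc, ← lintegral_const_mul' _ _ coe_ne_top]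
  gcongr with q
  exact (hLip m).edist_le_mul q.1 q.2

lemma W1_transferOperator_le (hLip : ∀ m, LipschitzWith (L m) (F m))
    (hc : ∑ m, p m * (L m : ℝ≥0∞) ≠ ⊤) (hW : W1 μ ν ≠ ⊤) :
    W1 (transferOperator p F μ) (transferOperator p F ν) ≤ (∑ m, p m * (L m : ℝ≥0∞)) * W1 μ ν :=
  W1_le_mul_W1_of_forall_isCoupling hc hW fun γ hγ =>
    (W1_le_lintegral_edist (hγ.transferOperator fun m => (hLip m).continuous.measurable)).trans
      (lintegral_edist_transferOperator_prodMap_le hLip γ)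

lemma eq_of_transferOperator_eq (hLip : ∀ m, LipschitzWith (L m) (F m))
    (hc : ∑ m, p m * (L m : ℝ≥0∞) < 1) [IsProbabilityMeasure μ] [IsProbabilityMeasure ν]
    (hμ : HasFiniteFirstMoment μ) (hν : HasFiniteFirstMoment ν)
    (hTμ : transferOperator p F μ = μ) (hTν : transferOperator p F ν = ν) : μ = ν := by
  have hW := (W1_lt_top hμ hν).ne
  have hle := W1_transferOperator_le hLip hc.ne_top hW
  rw [hTμ, hTν] at hle
  refine eq_of_W1_eq_zero (by_contra fun hW0 => ?_)
  have hlt := ENNReal.mul_lt_mul_right hW0 hW hc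
  rw [mul_one, mul_comm] at hlt
  exact hlt.not_ge hle

end Contraction

section DigitSequences

variable {α : Type*}

def seqTail (ω : ℕ → α) : ℕ → α := fun n => ω (n + 1)

variable [MeasurableSpace α]

lemma measurable_seqTail : Measurable (seqTail : (ℕ → α) → ℕ → α) :=
  measurable_pi_lambda _ fun n => measurable_pi_apply (n + 1)

variable (ν : Measure α) [IsProbabilityMeasure ν]

lemma measurePreserving_seqTail :
    MeasurePreserving seqTail (Measure.infinitePi fun _ : ℕ => ν) (Measure.infinitePi fun _ => ν) :=
  ⟨measurable_seqTail, Measure.map_infinitePi_infinitePi_of_inj Nat.succ_injective⟩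

lemma indepFun_head_seqTail :
    IndepFun (fun ω : ℕ → α => ω 0) seqTail (Measure.infinitePi fun _ : ℕ => ν) := by
  have hind := iIndepFun_infinitePi (P := fun _ : ℕ => ν) (X := fun _ => id)
    fun _ => measurable_id
  rw [iIndepFun_iff_iIndep] at hind
  have h := indep_iSup_of_disjoint (fun i => (measurable_pi_apply i).comap_le) hind
    (S := {0}) (T := Set.Ioi 0) (by simp)
  rw [IndepFun_iff_Indep]
  refine indep_of_indep_of_le_right (indep_of_indep_of_le_left h ?_) ?_
  · exact le_iSup₂_of_le (f := fun i (_ : i ∈ ({0} : Set ℕ)) => _) 0 rfl le_rfl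
  · rw [MeasurableSpace.pi, MeasurableSpace.comap_iSup]
    refine iSup_le fun n => ?_
    rw [MeasurableSpace.comap_comp]
    exact le_iSup₂_of_le (f := fun i (_ : i ∈ Set.Ioi 0) => _) (n + 1) n.succ_pos le_rfl

lemma infinitePi_map_head_seqTail :
    (Measure.infinitePi fun _ : ℕ => ν).map (fun ω => (ω 0, seqTail ω)) =
      ν.prod (Measure.infinitePi fun _ => ν) := by
  rw [(indepFun_head_seqTail ν).map_prod_eq_prod_map_map (measurable_pi_apply 0).aemeasurable
    measurable_seqTail.aemeasurable, Measure.infinitePi_map_eval,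
    (measurePreserving_seqTail ν).map_eq]

variable {M β : Type*} [MeasurableSpace M] [MeasurableSingletonClass M] [MeasurableSpace β]
  {g : M → (ℕ → M) → β}

lemma measurable_apply_head_seqTail [Countable M] (hg : ∀ m, Measurable (g m)) :
    Measurable fun ω => g (ω 0) (seqTail ω) :=
  (measurable_from_prod_countable_right (f := fun q : M × (ℕ → M) => g q.1 q.2) hg).comp
    ((measurable_pi_apply 0).prodMk measurable_seqTail)

variable [Fintype M] (ρ : Measure M)

lemma map_prod_eq_transferOperator {Ω : Type*} [MeasurableSpace Ω] (P : Measure Ω) [SFinite P]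
    {g : M → Ω → β} (hg : ∀ m, Measurable (g m)) :
    (ρ.prod P).map (fun q => g q.1 q.2) = transferOperator (fun m => ρ {m}) g P := by
  have hg' : Measurable fun q : M × Ω => g q.1 q.2 := measurable_from_prod_countable_right hg
  calc (ρ.prod P).map (fun q => g q.1 q.2)
      = ((Measure.sum fun m => ρ {m} • Measure.dirac m).prod P).map (fun q => g q.1 q.2) := by
        rw [Measure.sum_smul_dirac]
    _ = transferOperator (fun m => ρ {m}) g P := by
        rw [Measure.prod_sum_left, Measure.map_sum hg'.aemeasurable, Measure.sum_fintype]
        refine Finset.sum_congr rfl fun m _ => ?_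
        rw [Measure.prod_smul_left, Measure.map_smul, Measure.dirac_prod,
          Measure.map_map hg' measurable_prodMk_left]
        rfl

variable [IsProbabilityMeasure ρ]

lemma infinitePi_map_apply_head_seqTail (hg : ∀ m, Measurable (g m)) :
    (Measure.infinitePi fun _ : ℕ => ρ).map (fun ω => g (ω 0) (seqTail ω)) =
      transferOperator (fun m => ρ {m}) g (Measure.infinitePi fun _ => ρ) := by
  rw [show (fun ω => g (ω 0) (seqTail ω)) = (fun q => g q.1 q.2) ∘ fun ω => (ω 0, seqTail ω)
    from rfl, ← Measure.map_map (measurable_from_prod_countable_right hg)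
    ((measurable_pi_apply 0).prodMk measurable_seqTail), infinitePi_map_head_seqTail,
    map_prod_eq_transferOperator ρ _ hg]

lemma lintegral_apply_head_seqTail {f : M → (ℕ → M) → ℝ≥0∞} (hf : ∀ m, Measurable (f m)) :
    ∫⁻ ω, f (ω 0) (seqTail ω) ∂(Measure.infinitePi fun _ : ℕ => ρ) =
      ∑ m, ρ {m} * ∫⁻ ω, f m ω ∂(Measure.infinitePi fun _ => ρ) := by
  rw [← lintegral_map (f := fun y => y) measurable_id (measurable_apply_head_seqTail hf),
    infinitePi_map_apply_head_seqTail ρ hf,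
    lintegral_transferOperator (f := fun y => y) hf measurable_id]

end DigitSequences

section AeLimit

variable {Ω X : Type*} [MeasurableSpace Ω] [MetricSpace X] [MeasurableSpace X]
  {P : Measure Ω} {f : ℕ → Ω → X}

lemma exists_measurable_ae_tendsto_of_lintegral_tsum_edist_ne_top [BorelSpace X]
    [SecondCountableTopology X] [CompleteSpace X] (hf : ∀ n, Measurable (f n))
    (hsum : ∫⁻ ω, ∑' n, edist (f n ω) (f (n + 1) ω) ∂P ≠ ⊤) :
    ∃ g, Measurable g ∧ ∀ᵐ ω ∂P, Tendsto (fun n => f n ω) atTop (𝓝 (g ω)) := by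
  refine measurable_limit_of_tendsto_metrizable_ae (fun n => (hf n).aemeasurable) ?_
  filter_upwards [ae_lt_top (.tsum fun n => (hf n).edist (hf (n + 1))) hsum] with ω hω
  exact cauchySeq_tendsto_of_complete
    (cauchySeq_of_edist_le_of_tsum_ne_top _ (fun _ => le_rfl) hω.ne)

lemma hasFiniteFirstMoment_map_of_ae_tendsto [OpensMeasurableSpace X] {g : Ω → X}
    (hg : Measurable g) {x₀ : X} (hf₀ : ∀ ω, f 0 ω = x₀)
    (hlim : ∀ᵐ ω ∂P, Tendsto (fun n => f n ω) atTop (𝓝 (g ω)))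
    (hsum : ∫⁻ ω, ∑' n, edist (f n ω) (f (n + 1) ω) ∂P ≠ ⊤) :
    HasFiniteFirstMoment (P.map g) := by
  refine ⟨x₀, ?_⟩
  rw [lintegral_map (f := fun x => edist x x₀) (continuous_id.edist continuous_const).measurable hg]
  refine ne_top_of_le_ne_top hsum (lintegral_mono_ae ?_)
  filter_upwards [hlim] with ω hω
  refine le_of_tendsto' (hω.edist tendsto_const_nhds) fun n => ?_
  rw [edist_comm, ← hf₀ ω]
  exact (edist_le_range_sum_edist (fun n => f n ω) n).trans (ENNReal.sum_le_tsum _)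

end AeLimit

section BackwardIteration

variable {M X : Type*} [MeasurableSpace M] [MeasurableSingletonClass M] [MeasurableSpace X]
  {F : M → X → X}

def backwardIterate (F : M → X → X) (x₀ : X) : ℕ → (ℕ → M) → X
  | 0, _ => x₀
  | n + 1, ω => F (ω 0) (backwardIterate F x₀ n (seqTail ω))

lemma measurable_backwardIterate [Countable M] (hF : ∀ m, Measurable (F m)) (x₀ : X) (n : ℕ) :
    Measurable (backwardIterate F x₀ n) := by
  induction n with
  | zero => exact measurable_const
  | succ n ih => exact measurable_apply_head_seqTail fun m => (hF m).comp ih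

variable [Fintype M] [MetricSpace X] [BorelSpace X] [SecondCountableTopology X]
  {L : M → NNReal} (ρ : Measure M) [IsProbabilityMeasure ρ]

lemma lintegral_edist_backwardIterate_le (hLip : ∀ m, LipschitzWith (L m) (F m)) (x₀ : X)
    (n : ℕ) :
    ∫⁻ ω, edist (backwardIterate F x₀ n ω) (backwardIterate F x₀ (n + 1) ω)
        ∂(Measure.infinitePi fun _ : ℕ => ρ)
      ≤ (∑ m, ρ {m} * (L m : ℝ≥0∞)) ^ n * ∑ m, ρ {m} * edist x₀ (F m x₀) := by
  have hF : ∀ m, Measurable (F m) := fun m => (hLip m).continuous.measurable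
  induction n with
  | zero =>
    refine (lintegral_apply_head_seqTail ρ (f := fun m _ => edist x₀ (F m x₀))
      fun _ => measurable_const).trans_le ?_
    simp
  | succ n ih =>
    have hD := (measurable_backwardIterate hF x₀ n).edist
      (measurable_backwardIterate hF x₀ (n + 1))
    calc ∫⁻ ω, edist (backwardIterate F x₀ (n + 1) ω) (backwardIterate F x₀ (n + 2) ω)
          ∂(Measure.infinitePi fun _ : ℕ => ρ)
        ≤ ∫⁻ ω, L (ω 0) * edist (backwardIterate F x₀ n (seqTail ω))
            (backwardIterate F x₀ (n + 1) (seqTail ω)) ∂(Measure.infinitePi fun _ : ℕ => ρ) :=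
          lintegral_mono fun ω => (hLip (ω 0)).edist_le_mul _ _
      _ = ∑ m, ρ {m} * (L m * ∫⁻ ω, edist (backwardIterate F x₀ n ω)
            (backwardIterate F x₀ (n + 1) ω) ∂(Measure.infinitePi fun _ : ℕ => ρ)) := by
          rw [lintegral_apply_head_seqTail ρ (f := fun m ω => L m *
            edist (backwardIterate F x₀ n ω) (backwardIterate F x₀ (n + 1) ω))
            fun m => hD.const_mul _]
          simp_rw [lintegral_const_mul' _ _ coe_ne_top]
      _ ≤ ∑ m, ρ {m} * (L m * ((∑ m, ρ {m} * (L m : ℝ≥0∞)) ^ n *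
            ∑ m, ρ {m} * edist x₀ (F m x₀))) := by gcongr
      _ = (∑ m, ρ {m} * (L m : ℝ≥0∞)) ^ (n + 1) * ∑ m, ρ {m} * edist x₀ (F m x₀) := by
          rw [pow_succ', mul_assoc, Finset.sum_mul]
          simp only [mul_assoc]

lemma lintegral_tsum_edist_backwardIterate_ne_top (hLip : ∀ m, LipschitzWith (L m) (F m))
    (hc : ∑ m, ρ {m} * (L m : ℝ≥0∞) < 1) (x₀ : X) :
    ∫⁻ ω, ∑' n, edist (backwardIterate F x₀ n ω) (backwardIterate F x₀ (n + 1) ω)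
      ∂(Measure.infinitePi fun _ : ℕ => ρ) ≠ ⊤ := by
  have hF : ∀ m, Measurable (F m) := fun m => (hLip m).continuous.measurable
  rw [lintegral_tsum fun n => ((measurable_backwardIterate hF x₀ n).edist
    (measurable_backwardIterate hF x₀ (n + 1))).aemeasurable]
  refine ne_top_of_le_ne_top ?_
    (ENNReal.tsum_le_tsum (lintegral_edist_backwardIterate_le ρ hLip x₀))
  rw [ENNReal.tsum_mul_right, ENNReal.tsum_geometric]
  exact mul_ne_top (inv_ne_top.2 (tsub_pos_iff_lt.2 hc).ne')
    (ENNReal.sum_ne_top.2 fun m _ => mul_ne_top (measure_ne_top _ _) (edist_ne_top _ _))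

theorem exists_transferOperator_eq [CompleteSpace X] [Nonempty X]
    (hLip : ∀ m, LipschitzWith (L m) (F m)) (hc : ∑ m, ρ {m} * (L m : ℝ≥0∞) < 1) :
    ∃ μ : Measure X, IsProbabilityMeasure μ ∧ HasFiniteFirstMoment μ ∧
      transferOperator (fun m => ρ {m}) F μ = μ := by
  obtain ⟨x₀⟩ := ‹Nonempty X›
  have hF : ∀ m, Measurable (F m) := fun m => (hLip m).continuous.measurable
  have hsum := lintegral_tsum_edist_backwardIterate_ne_top ρ hLip hc x₀
  obtain ⟨Z, hZ, hlim⟩ := exists_measurable_ae_tendsto_of_lintegral_tsum_edist_ne_top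
    (measurable_backwardIterate hF x₀) hsum
  have hfix : (fun ω => F (ω 0) (Z (seqTail ω))) =ᵐ[Measure.infinitePi fun _ => ρ] Z := by
    filter_upwards [hlim, (measurePreserving_seqTail ρ).quasiMeasurePreserving.ae hlim]
      with ω hω hω'
    exact tendsto_nhds_unique (((hLip (ω 0)).continuous.tendsto _).comp hω')
      (hω.comp (tendsto_add_atTop_nat 1))
  refine ⟨_, Measure.isProbabilityMeasure_map hZ.aemeasurable,
    hasFiniteFirstMoment_map_of_ae_tendsto hZ (fun _ => rfl) hlim hsum, ?_⟩
  rw [transferOperator_map hZ hF, ← infinitePi_map_apply_head_seqTail ρ fun m => (hF m).comp hZ]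
  exact Measure.map_congr hfix

end BackwardIteration

theorem ifs_unique_invariant_measure_general
    {X : Type*} [MetricSpace X] [CompleteSpace X] [TopologicalSpace.SeparableSpace X]
    [MeasurableSpace X] [BorelSpace X] [Nonempty X]
    {M : Type*} [Fintype M]
    (F : M → X → X) (L : M → NNReal) (hLip : ∀ m, LipschitzWith (L m) (F m))
    (p : M → ℝ≥0∞) (hp1 : ∑ m, p m = 1)
    (hcontr : ∑ m, p m * (L m : ℝ≥0∞) < 1) :
    (∀ μ ν : Measure X, IsProbabilityMeasure μ → IsProbabilityMeasure ν →
        HasFiniteFirstMoment μ → HasFiniteFirstMoment ν →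
        W1 (∑ m, p m • Measure.map (F m) μ) (∑ m, p m • Measure.map (F m) ν)
          ≤ (∑ m, p m * (L m : ℝ≥0∞)) * W1 μ ν) ∧
      (∃! μ : Measure X, IsProbabilityMeasure μ ∧ HasFiniteFirstMoment μ ∧
        (∑ m, p m • Measure.map (F m) μ) = μ) := by
  have : SecondCountableTopology X := UniformSpace.secondCountable_of_separable X
  let _ : MeasurableSpace M := ⊤
  let ρ : Measure M := (PMF.ofFintype p hp1).toMeasure
  have hρ : ∀ m, ρ {m} = p m := fun m => PMF.toMeasure_apply_singleton _ m (.singleton m)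
  refine ⟨fun μ ν _ _ hμ hν => W1_transferOperator_le hLip hcontr.ne_top (W1_lt_top hμ hν).ne, ?_⟩
  obtain ⟨μ, hμ, hμm, hTμ⟩ := exists_transferOperator_eq ρ hLip (by simpa only [hρ] using hcontr)
  simp only [hρ] at hTμ
  exact ⟨μ, ⟨hμ, hμm, hTμ⟩, fun ν ⟨_, hνm, hTν⟩ =>
    eq_of_transferOperator_eq hLip hcontr hνm hμm hTν hTμ⟩

/-- An IFS with finitely many Lipschitz maps, strictly positive probabilities and average
contraction `Σ p_m L_m < 1` has a contractive dual transfer operator on the Wasserstein-1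
space, and hence a unique invariant probability measure with finite first moment. -/
theorem ifs_unique_invariant_measure
    {X : Type*} [MetricSpace X] [CompleteSpace X] [TopologicalSpace.SeparableSpace X]
    [MeasurableSpace X] [BorelSpace X] [Nonempty X]
    {M : Type*} [Fintype M]
    (F : M → X → X) (L : M → NNReal) (hLip : ∀ m, LipschitzWith (L m) (F m))
    (p : M → ℝ≥0∞) (hp0 : ∀ m, 0 < p m) (hp1 : ∑ m, p m = 1)
    (hcontr : ∑ m, p m * (L m : ℝ≥0∞) < 1) :
    (∀ μ ν : Measure X, IsProbabilityMeasure μ → IsProbabilityMeasure ν →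
        HasFiniteFirstMoment μ → HasFiniteFirstMoment ν →
        W1 (∑ m, p m • Measure.map (F m) μ) (∑ m, p m • Measure.map (F m) ν)
          ≤ (∑ m, p m * (L m : ℝ≥0∞)) * W1 μ ν) ∧
      (∃! μ : Measure X, IsProbabilityMeasure μ ∧ HasFiniteFirstMoment μ ∧
        (∑ m, p m • Measure.map (F m) μ) = μ) :=
  ifs_unique_invariant_measure_general F L hLip p hp1 hcontr
end

section
/- The dual transfer operator μ ↦ Σ_m p_m (F_m)_* μ of an iterated function system with Σ_m p_m Lip(F_m) ≤ c < 1 is a c-Lipschitz map with respect to the Wasserstein-1 distance on probability measures with finite first moment. -/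
/-!
For a coupling `γ` of `μ` and `ν`, the measure `∑ m, p m • (F m × F m)_* γ` is a coupling of the
two images under the dual transfer operator, because the coordinate projections intertwine
`F m × F m` with `F m`. Its transport cost is at most `∑ m, p m Lip(F m) ≤ c` times that of `γ`,
so taking the infimum over `γ` gives the bound.
-/

open MeasureTheory ENNReal

noncomputable def dualTransfer {M Y : Type*} [Fintype M] [MeasurableSpace Y]
    (p : M → ℝ≥0∞) (G : M → Y → Y) (ρ : Measure Y) : Measure Y :=
  ∑ m, p m • ρ.map (G m)

lemma map_dualTransfer_of_semiconj {M Y Z : Type*} [Fintype M] [MeasurableSpace Y]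
    [MeasurableSpace Z] {p : M → ℝ≥0∞} {G : M → Y → Y} {H : M → Z → Z} {φ : Y → Z}
    (hφ : Measurable φ) (hG : ∀ m, Measurable (G m)) (hH : ∀ m, Measurable (H m))
    (hsemi : ∀ m, Function.Semiconj φ (G m) (H m)) (ρ : Measure Y) :
    (dualTransfer p G ρ).map φ = dualTransfer p H (ρ.map φ) := by
  rw [dualTransfer, dualTransfer, Measure.map_finset_sum' hφ.aemeasurable]
  refine Finset.sum_congr rfl fun m _ => ?_
  rw [Measure.map_smul, Measure.map_map hφ (hG m), Measure.map_map (hH m) hφ,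
    (hsemi m).comp_eq]

lemma lintegral_edist_map_prodMap_le {X : Type*} [PseudoEMetricSpace X] [MeasurableSpace X]
    {K : NNReal} {f : X → X} (hf : LipschitzWith K f) (ρ : Measure (X × X)) :
    ∫⁻ q, edist q.1 q.2 ∂ρ.map (Prod.map f f) ≤ K * ∫⁻ q, edist q.1 q.2 ∂ρ :=
  calc ∫⁻ q, edist q.1 q.2 ∂ρ.map (Prod.map f f)
      ≤ ∫⁻ q, edist (f q.1) (f q.2) ∂ρ := lintegral_map_le _ _
    _ ≤ ∫⁻ q, K * edist q.1 q.2 ∂ρ := lintegral_mono fun q => hf q.1 q.2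
    _ = K * ∫⁻ q, edist q.1 q.2 ∂ρ := lintegral_const_mul' _ _ coe_ne_top

lemma lintegral_edist_dualTransfer_prodMap_le {M X : Type*} [Fintype M] [PseudoEMetricSpace X]
    [MeasurableSpace X] {F : M → X → X} {L : M → NNReal} (hLip : ∀ m, LipschitzWith (L m) (F m))
    (p : M → ℝ≥0∞) (ρ : Measure (X × X)) :
    ∫⁻ q, edist q.1 q.2 ∂dualTransfer p (fun m => Prod.map (F m) (F m)) ρ
      ≤ (∑ m, p m * L m) * ∫⁻ q, edist q.1 q.2 ∂ρ := by
  rw [dualTransfer, lintegral_finsetSum_measure, Finset.sum_mul]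
  refine Finset.sum_le_sum fun m _ => ?_
  rw [lintegral_smul_measure, smul_eq_mul, mul_assoc]
  gcongr
  exact lintegral_edist_map_prodMap_le (hLip m) ρ

lemma W1_le_mul_of_forall_coupling {X : Type*} [MeasurableSpace X] [MetricSpace X]
    {μ ν μ' ν' : Measure X} {c : ℝ≥0∞} (hc0 : c ≠ 0) (hc : c ≠ ∞)
    (h : ∀ γ : Measure (X × X), γ.map Prod.fst = μ → γ.map Prod.snd = ν →
      ∃ γ' : Measure (X × X), (γ'.map Prod.fst = μ' ∧ γ'.map Prod.snd = ν') ∧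
        ∫⁻ q, edist q.1 q.2 ∂γ' ≤ c * ∫⁻ q, edist q.1 q.2 ∂γ) :
    W1 μ' ν' ≤ c * W1 μ ν := by
  simp_rw [W1, ENNReal.mul_iInf_of_ne hc0 hc]
  refine le_iInf₂ fun γ hγ => ?_
  obtain ⟨γ', hγ', hcost⟩ := h γ hγ.1 hγ.2
  exact (iInf₂_le γ' hγ').trans hcost

theorem dual_transfer_operator_lipschitz_general
    {X : Type*} [MetricSpace X]
    [MeasurableSpace X] [BorelSpace X]
    {M : Type*} [Fintype M]
    (F : M → X → X) (L : M → NNReal) (hLip : ∀ m, LipschitzWith (L m) (F m))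
    (p : M → ℝ≥0∞)
    (c : ℝ≥0∞) (hc0 : 0 < c) (hc1 : c < 1)
    (hcontr : ∑ m, p m * (L m : ℝ≥0∞) ≤ c) :
    ∀ μ ν : Measure X, IsProbabilityMeasure μ → IsProbabilityMeasure ν →
      HasFiniteFirstMoment μ → HasFiniteFirstMoment ν →
      W1 (∑ m, p m • Measure.map (F m) μ) (∑ m, p m • Measure.map (F m) ν)
        ≤ c * W1 μ ν := by
  intro μ ν _ _ _ _
  have hF : ∀ m, Measurable (F m) := fun m => (hLip m).continuous.measurable
  have hFF : ∀ m, Measurable (Prod.map (F m) (F m)) := fun m => (hF m).prodMap (hF m)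
  refine W1_le_mul_of_forall_coupling hc0.ne' (hc1.trans_le le_top).ne fun γ hγ₁ hγ₂ => ?_
  refine ⟨dualTransfer p (fun m => Prod.map (F m) (F m)) γ, ⟨?_, ?_⟩, ?_⟩
  · rw [map_dualTransfer_of_semiconj measurable_fst hFF hF (fun _ _ => rfl), hγ₁, dualTransfer]
  · rw [map_dualTransfer_of_semiconj measurable_snd hFF hF (fun _ _ => rfl), hγ₂, dualTransfer]
  · exact (lintegral_edist_dualTransfer_prodMap_le hLip p γ).trans (by gcongr)

/-- The dual transfer operator `μ ↦ Σ_m p_m (F_m)_* μ` of an IFS with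
`Σ_m p_m Lip(F_m) ≤ c < 1` is `c`-Lipschitz for the Wasserstein-1 distance. -/
theorem dual_transfer_operator_lipschitz
    {X : Type*} [MetricSpace X] [CompleteSpace X] [TopologicalSpace.SeparableSpace X]
    [MeasurableSpace X] [BorelSpace X]
    {M : Type*} [Fintype M]
    (F : M → X → X) (L : M → NNReal) (hLip : ∀ m, LipschitzWith (L m) (F m))
    (p : M → ℝ≥0∞) (hp0 : ∀ m, 0 ≤ p m) (hp1 : ∑ m, p m = 1)
    (c : ℝ≥0∞) (hc0 : 0 < c) (hc1 : c < 1)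
    (hcontr : ∑ m, p m * (L m : ℝ≥0∞) ≤ c) :
    ∀ μ ν : Measure X, IsProbabilityMeasure μ → IsProbabilityMeasure ν →
      HasFiniteFirstMoment μ → HasFiniteFirstMoment ν →
      W1 (∑ m, p m • Measure.map (F m) μ) (∑ m, p m • Measure.map (F m) ν)
        ≤ c * W1 μ ν :=
  dual_transfer_operator_lipschitz_general F L hLip p c hc0 hc1 hcontr
end
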